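/- arXiv:1703.06652 — 3 statements merged into one kernel-verified Lean document; each statement's English description precedes it below -/
import Mathlib

section
/- Suppose the factor graph admits a valid solution x* and the priors satisfy the sufficient initialization for x*. Then for every iteration n ≥ 1 and every variable v ∈ V, the marginals satisfy r^{(n)}_v(x*_v) > r^{(n)}_v(1 − x*_v); consequently the BP decision x̂^{(n)}_v = 1{ r^{(n)}_v(1) ≥ r^{(n)}_v(0) } equals x*_v for every n ≥ 1 and every v ∈ V. -/
open Finset

/-- A factor graph: finite variable index set `V`, finite factor index set `𝒥`,
a nonempty neighborhood `nbhd J ⊆ V` for each factor `J`, every variable belonging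
to at least one factor, and a `{0,1}`-valued factor function `g J` on `{0,1}^{V_J}`. -/
structure FactorGraph (V 𝒥 : Type) [Fintype V] [DecidableEq V] [Fintype 𝒥] [DecidableEq 𝒥] where
  nbhd : 𝒥 → Finset V
  nbhd_nonempty : ∀ J : 𝒥, (nbhd J).Nonempty
  facs_nonempty : ∀ v : V, ∃ J : 𝒥, v ∈ nbhd J
  g : (J : 𝒥) → ({y // y ∈ nbhd J} → Bool) → Bool

variable {V 𝒥 : Type} [Fintype V] [DecidableEq V] [Fintype 𝒥] [DecidableEq 𝒥]

/-- `𝒥_v`: the set of factors adjacent to variable `v`. -/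
def FactorGraph.Jset (FG : FactorGraph V 𝒥) (v : V) : Finset 𝒥 :=
  univ.filter fun J => v ∈ FG.nbhd J

/-- Restriction of a global assignment to the neighborhood of factor `J`. -/
def FactorGraph.restrict (FG : FactorGraph V 𝒥) (x : V → Bool) (J : 𝒥) :
    {y // y ∈ FG.nbhd J} → Bool :=
  fun y => x y.1

/-- `x` is a valid solution if every factor evaluates to `1` on it. -/
def FactorGraph.ValidSolution (FG : FactorGraph V 𝒥) (x : V → Bool) : Prop :=
  ∀ J : 𝒥, FG.g J (FG.restrict x J) = true

/-- `κ_v = max_{J ∈ 𝒥_v} |{z ∈ {0,1}^{V_J} : g_J(z) = 1}|`. -/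
def FactorGraph.kappa (FG : FactorGraph V 𝒥) (v : V) : ℕ :=
  (FG.Jset v).sup fun J =>
    ((univ : Finset ({y // y ∈ FG.nbhd J} → Bool)).filter fun z => FG.g J z = true).card

/-- `ε_v = 1 / (1 + κ_v ^ |𝒥_v|)`. -/
noncomputable def FactorGraph.eps (FG : FactorGraph V 𝒥) (v : V) : ℝ :=
  1 / (1 + (FG.kappa v : ℝ) ^ (FG.Jset v).card)

/-- Priors: `P_v(0) = q_v`, `P_v(1) = 1 - q_v`. -/
def prior (q : V → ℝ) (v : V) (x : Bool) : ℝ :=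
  if x then 1 - q v else q v

/-- A run of loopy belief propagation on the factor graph `FG` with priors `q`:
messages `mVF` (variable-to-factor) and `mFV` (factor-to-variable) in `[0,1]`,
positive normalization constants, initialization by the priors, the sum-product
update rules, and per-message normalization. -/
structure BPRun (FG : FactorGraph V 𝒥) (q : V → ℝ) where
  q_mem : ∀ v : V, q v ∈ Set.Icc (0 : ℝ) 1
  mVF : ℕ → V → 𝒥 → Bool → ℝ
  mFV : ℕ → 𝒥 → V → Bool → ℝ
  CFV : ℕ → 𝒥 → V → ℝ
  CVF : ℕ → V → 𝒥 → ℝ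
  CFV_pos : ∀ n J v, v ∈ FG.nbhd J → 0 < CFV n J v
  CVF_pos : ∀ n v J, v ∈ FG.nbhd J → 0 < CVF n v J
  mVF_mem : ∀ n v J x, v ∈ FG.nbhd J → mVF n v J x ∈ Set.Icc (0 : ℝ) 1
  mFV_mem : ∀ n J v x, v ∈ FG.nbhd J → mFV n J v x ∈ Set.Icc (0 : ℝ) 1
  mVF_init : ∀ v J, v ∈ FG.nbhd J →
    mVF 0 v J false = q v ∧ mVF 0 v J true = 1 - q v
  mFV_eq : ∀ n : ℕ, ∀ J v, ∀ hv : v ∈ FG.nbhd J, ∀ x : Bool,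
    mFV (n + 1) J v x = CFV (n + 1) J v *
      ∑ z : {y // y ∈ FG.nbhd J} → Bool,
        (if z ⟨v, hv⟩ = x ∧ FG.g J z = true then
          ∏ y ∈ ((FG.nbhd J).erase v).attach,
            mVF n y.1 J (z ⟨y.1, Finset.mem_of_mem_erase y.2⟩)
        else 0)
  mVF_eq : ∀ n : ℕ, ∀ v J, v ∈ FG.nbhd J → ∀ x : Bool,
    mVF (n + 1) v J x = CVF (n + 1) v J * prior q v x *
      ∏ I ∈ (FG.Jset v).erase J, mFV (n + 1) I v x
  mVF_norm : ∀ n v J, v ∈ FG.nbhd J → mVF n v J false + mVF n v J true = 1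
  mFV_norm : ∀ n J v, v ∈ FG.nbhd J →
    mFV (n + 1) J v false + mFV (n + 1) J v true = 1

/-- Marginals: `r^{(n)}_v(x) = P_v(x) · ∏_{J ∈ 𝒥_v} m^{(n)}_{J→v}(x)`. -/
noncomputable def marginal (FG : FactorGraph V 𝒥) {q : V → ℝ} (R : BPRun FG q)
    (n : ℕ) (v : V) (x : Bool) : ℝ :=
  prior q v x * ∏ J ∈ FG.Jset v, R.mFV n J v x

/-- The priors satisfy the sufficient initialization for `x`:
`q_v > 1 - ε_v` if `x_v = 0` and `q_v < ε_v` if `x_v = 1`. -/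
def SuffInit (FG : FactorGraph V 𝒥) (q : V → ℝ) (x : V → Bool) : Prop :=
  ∀ v : V, (x v = false → 1 - FG.eps v < q v) ∧ (x v = true → q v < FG.eps v)

section AuxBP

variable {V' 𝒥' : Type} [Fintype V'] [DecidableEq V'] [Fintype 𝒥'] [DecidableEq 𝒥']

lemma mem_Jset {FG : FactorGraph V' 𝒥'} {v : V'} {J : 𝒥'} :
    J ∈ FG.Jset v ↔ v ∈ FG.nbhd J := by
  simp [FactorGraph.Jset]

lemma one_le_kappa {FG : FactorGraph V' 𝒥'} {xstar : V' → Bool}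
    (hvalid : FG.ValidSolution xstar) (v : V') : 1 ≤ FG.kappa v := by
  obtain ⟨J, hJ⟩ := FG.facs_nonempty v
  have h1 : 1 ≤ ((univ : Finset ({y // y ∈ FG.nbhd J} → Bool)).filter
      fun z => FG.g J z = true).card := by
    refine Finset.card_pos.2 ⟨FG.restrict xstar J, ?_⟩
    simp [hvalid J]
  exact le_trans h1 (Finset.le_sup (f := fun J =>
    ((univ : Finset ({y // y ∈ FG.nbhd J} → Bool)).filter
      fun z => FG.g J z = true).card) (mem_Jset.2 hJ))

lemma one_le_kappa_real {FG : FactorGraph V' 𝒥'} {xstar : V' → Bool}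
    (hvalid : FG.ValidSolution xstar) (v : V') : (1 : ℝ) ≤ (FG.kappa v : ℝ) := by
  exact_mod_cast one_le_kappa hvalid v

lemma eps_pos (FG : FactorGraph V' 𝒥') (v : V') : 0 < FG.eps v := by
  have h : (0:ℝ) ≤ (FG.kappa v : ℝ) ^ (FG.Jset v).card := pow_nonneg (Nat.cast_nonneg _) _
  unfold FactorGraph.eps
  positivity

lemma one_sub_eps (FG : FactorGraph V' 𝒥') (v : V') :
    1 - FG.eps v = (FG.kappa v : ℝ) ^ (FG.Jset v).card * FG.eps v := by
  have h : (0:ℝ) ≤ (FG.kappa v : ℝ) ^ (FG.Jset v).card := pow_nonneg (Nat.cast_nonneg _) _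
  have h2 : (0:ℝ) < 1 + (FG.kappa v : ℝ) ^ (FG.Jset v).card := by linarith
  unfold FactorGraph.eps
  field_simp
  ring

lemma one_sub_eps_pos {FG : FactorGraph V' 𝒥'} {xstar : V' → Bool}
    (hvalid : FG.ValidSolution xstar) (v : V') : 0 < 1 - FG.eps v := by
  rw [one_sub_eps]
  have h1 : (1:ℝ) ≤ (FG.kappa v : ℝ) ^ (FG.Jset v).card :=
    one_le_pow₀ (one_le_kappa_real hvalid v)
  exact mul_pos (lt_of_lt_of_le one_pos h1) (eps_pos FG v)

lemma eps_le_one_sub {FG : FactorGraph V' 𝒥'} {xstar : V' → Bool}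
    (hvalid : FG.ValidSolution xstar) (v : V') : FG.eps v ≤ 1 - FG.eps v := by
  rw [one_sub_eps]
  have h1 : (1:ℝ) ≤ (FG.kappa v : ℝ) ^ (FG.Jset v).card :=
    one_le_pow₀ (one_le_kappa_real hvalid v)
  nlinarith [eps_pos FG v]

lemma prior_bounds {FG : FactorGraph V' 𝒥'} {q : V' → ℝ} {xstar : V' → Bool}
    (hinit : SuffInit FG q xstar) (v : V') :
    1 - FG.eps v < prior q v (xstar v) ∧ prior q v (!xstar v) < FG.eps v := by
  obtain ⟨h0, h1⟩ := hinit v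
  cases hx : xstar v with
  | false =>
      have hq := h0 hx
      refine ⟨?_, ?_⟩ <;> simp [prior] <;> linarith
  | true =>
      have hq := h1 hx
      refine ⟨?_, ?_⟩ <;> simp [prior] <;> linarith

lemma prior_nonneg {q : V' → ℝ} {v : V'} (hq : q v ∈ Set.Icc (0:ℝ) 1) (x : Bool) :
    0 ≤ prior q v x := by
  obtain ⟨h0, h1⟩ := hq
  cases x <;> simp [prior] <;> linarith

/-- Factor-to-variable message bounds: if all incoming variable messages are
biased toward `x*`, then `m_{J→v}(x*_v) > 0` and
`m_{J→v}(¬x*_v) ≤ κ_v · m_{J→v}(x*_v)`. -/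
lemma mFV_bounds {FG : FactorGraph V' 𝒥'} {q : V' → ℝ} (R : BPRun FG q)
    {xstar : V' → Bool} (hvalid : FG.ValidSolution xstar) (n : ℕ)
    (hGood : ∀ v J, v ∈ FG.nbhd J → 0 < R.mVF n v J (xstar v) ∧
      R.mVF n v J (!xstar v) ≤ R.mVF n v J (xstar v))
    {J : 𝒥'} {v : V'} (hv : v ∈ FG.nbhd J) :
    0 < R.mFV (n+1) J v (xstar v) ∧
      R.mFV (n+1) J v (!xstar v) ≤ (FG.kappa v : ℝ) * R.mFV (n+1) J v (xstar v) := by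
  have hC := R.CFV_pos (n+1) J v hv
  set P : ℝ := ∏ y ∈ ((FG.nbhd J).erase v).attach, R.mVF n y.1 J (xstar y.1) with hPdef
  have hPpos : 0 < P :=
    Finset.prod_pos fun y _ => (hGood y.1 J (Finset.mem_of_mem_erase y.2)).1
  set f : Bool → ({y // y ∈ FG.nbhd J} → Bool) → ℝ := fun x z =>
    (if z ⟨v, hv⟩ = x ∧ FG.g J z = true then
      ∏ y ∈ ((FG.nbhd J).erase v).attach,
        R.mVF n y.1 J (z ⟨y.1, Finset.mem_of_mem_erase y.2⟩)
    else 0) with hf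
  have hfeq : ∀ x : Bool, R.mFV (n+1) J v x = R.CFV (n+1) J v * ∑ z, f x z :=
    fun x => R.mFV_eq n J v hv x
  have hterm_nonneg : ∀ (x : Bool) (z : {y // y ∈ FG.nbhd J} → Bool), 0 ≤ f x z := by
    intro x z
    rw [hf]
    dsimp only
    split
    · exact Finset.prod_nonneg fun y _ =>
        (R.mVF_mem n y.1 J _ (Finset.mem_of_mem_erase y.2)).1
    · exact le_refl 0
  -- lower bound for the correct value
  have hS1 : P ≤ ∑ z, f (xstar v) z := by
    have hmem := Finset.mem_univ (FG.restrict xstar J)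
    have hsingle := Finset.single_le_sum (f := f (xstar v))
      (fun z _ => hterm_nonneg _ z) hmem
    have hval : f (xstar v) (FG.restrict xstar J) = P := by
      rw [hf]
      dsimp only
      rw [if_pos ⟨rfl, hvalid J⟩]
      rfl
    rwa [hval] at hsingle
  -- upper bound for the wrong value
  have hS2 : (∑ z, f (!xstar v) z) ≤ (FG.kappa v : ℝ) * P := by
    have hle : ∀ z, f (!xstar v) z ≤ (if FG.g J z = true then P else 0) := by
      intro z
      rw [hf]
      dsimp only
      by_cases hc : z ⟨v, hv⟩ = (!xstar v) ∧ FG.g J z = true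
      · rw [if_pos hc, if_pos hc.2, hPdef]
        refine Finset.prod_le_prod (fun y _ =>
          (R.mVF_mem n y.1 J _ (Finset.mem_of_mem_erase y.2)).1) ?_
        intro y _
        by_cases hy : z ⟨y.1, Finset.mem_of_mem_erase y.2⟩ = xstar y.1
        · rw [hy]
        · have hz : z ⟨y.1, Finset.mem_of_mem_erase y.2⟩ = !xstar y.1 := by
            cases h1 : z ⟨y.1, Finset.mem_of_mem_erase y.2⟩ <;>
              cases h2 : xstar y.1 <;> simp_all
          rw [hz]
          exact (hGood y.1 J (Finset.mem_of_mem_erase y.2)).2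
      · rw [if_neg hc]
        split
        · exact hPpos.le
        · exact le_refl 0
    calc (∑ z, f (!xstar v) z)
        ≤ ∑ z : {y // y ∈ FG.nbhd J} → Bool, (if FG.g J z = true then P else 0) :=
          Finset.sum_le_sum fun z _ => hle z
      _ = (((univ : Finset ({y // y ∈ FG.nbhd J} → Bool)).filter
            fun z => FG.g J z = true).card : ℝ) * P := by
          rw [Finset.sum_ite, Finset.sum_const, Finset.sum_const_zero, add_zero,
            nsmul_eq_mul]
      _ ≤ (FG.kappa v : ℝ) * P := by
          refine mul_le_mul_of_nonneg_right ?_ hPpos.le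
          exact_mod_cast Finset.le_sup (f := fun J =>
            ((univ : Finset ({y // y ∈ FG.nbhd J} → Bool)).filter
              fun z => FG.g J z = true).card) (mem_Jset.2 hv)
  have hpos : 0 < R.mFV (n+1) J v (xstar v) := by
    rw [hfeq]
    exact mul_pos hC (lt_of_lt_of_le hPpos hS1)
  refine ⟨hpos, ?_⟩
  rw [hfeq, hfeq]
  calc R.CFV (n+1) J v * ∑ z, f (!xstar v) z
      ≤ R.CFV (n+1) J v * ((FG.kappa v : ℝ) * P) := mul_le_mul_of_nonneg_left hS2 hC.le
    _ = (FG.kappa v : ℝ) * (R.CFV (n+1) J v * P) := by ring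
    _ ≤ (FG.kappa v : ℝ) * (R.CFV (n+1) J v * ∑ z, f (xstar v) z) := by
        refine mul_le_mul_of_nonneg_left ?_ (Nat.cast_nonneg _)
        exact mul_le_mul_of_nonneg_left hS1 hC.le

/-- The invariant: at every time `n`, every variable-to-factor message is
positive at `x*_v` and biased toward `x*_v`. -/
lemma good_invariant {FG : FactorGraph V' 𝒥'} {q : V' → ℝ} (R : BPRun FG q)
    {xstar : V' → Bool} (hvalid : FG.ValidSolution xstar)
    (hinit : SuffInit FG q xstar) :
    ∀ n : ℕ, ∀ v J, v ∈ FG.nbhd J → 0 < R.mVF n v J (xstar v) ∧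
      R.mVF n v J (!xstar v) ≤ R.mVF n v J (xstar v) := by
  intro n
  induction n with
  | zero =>
      intro v J hv
      obtain ⟨hq0, hq1⟩ := R.mVF_init v J hv
      have hεle := eps_le_one_sub hvalid v
      have hεpos := eps_pos FG v
      obtain ⟨hps, hpn⟩ := prior_bounds hinit v
      have h1 : (0:ℝ) < 1 - FG.eps v := one_sub_eps_pos hvalid v
      cases hx : xstar v with
      | false =>
          rw [hx] at hps hpn
          simp only [prior] at hps hpn
          simp only [Bool.not_false]
          rw [hq0, hq1]
          constructor <;> simp_all <;> linarith
      | true =>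
          rw [hx] at hps hpn
          simp only [prior] at hps hpn
          simp only [Bool.not_true]
          rw [hq0, hq1]
          constructor <;> simp_all <;> linarith
  | succ n ih =>
      intro v J hv
      have hJmem : J ∈ FG.Jset v := mem_Jset.2 hv
      have hC := R.CVF_pos (n+1) v J hv
      obtain ⟨hps, hpn⟩ := prior_bounds hinit v
      have hεpos := eps_pos FG v
      have h1ε : (0:ℝ) < 1 - FG.eps v := one_sub_eps_pos hvalid v
      have hpriors : 0 < prior q v (xstar v) := lt_trans h1ε hps
      have hpriorn : 0 ≤ prior q v (!xstar v) := prior_nonneg (R.q_mem v) _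
      set Q : ℝ := ∏ I ∈ (FG.Jset v).erase J, R.mFV (n+1) I v (xstar v) with hQ
      have hbounds : ∀ I ∈ (FG.Jset v).erase J, 0 < R.mFV (n+1) I v (xstar v) ∧
          R.mFV (n+1) I v (!xstar v) ≤ (FG.kappa v : ℝ) * R.mFV (n+1) I v (xstar v) :=
        fun I hI => mFV_bounds R hvalid n ih
          (mem_Jset.1 (Finset.mem_of_mem_erase hI))
      have hQpos : 0 < Q := Finset.prod_pos fun I hI => (hbounds I hI).1
      have hcard : ((FG.Jset v).erase J).card = (FG.Jset v).card - 1 :=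
        Finset.card_erase_of_mem hJmem
      have hκ1 : (1:ℝ) ≤ (FG.kappa v : ℝ) := one_le_kappa_real hvalid v
      -- product bound for the wrong value
      have hprod : (∏ I ∈ (FG.Jset v).erase J, R.mFV (n+1) I v (!xstar v))
          ≤ (FG.kappa v : ℝ) ^ ((FG.Jset v).erase J).card * Q := by
        rw [hQ, ← Finset.prod_const, ← Finset.prod_mul_distrib]
        refine Finset.prod_le_prod (fun I hI =>
          (R.mFV_mem (n+1) I v _ (mem_Jset.1 (Finset.mem_of_mem_erase hI))).1) ?_
        intro I hI
        exact (hbounds I hI).2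
      have hκe : (FG.kappa v : ℝ) ^ ((FG.Jset v).erase J).card
          ≤ (FG.kappa v : ℝ) ^ (FG.Jset v).card := by
        rw [hcard]
        exact pow_le_pow_right₀ hκ1 (Nat.sub_le _ _)
      have hkey : prior q v (!xstar v) * ((FG.kappa v : ℝ) ^ ((FG.Jset v).erase J).card)
          ≤ prior q v (xstar v) := by
        have hb : prior q v (!xstar v) * ((FG.kappa v : ℝ) ^ ((FG.Jset v).erase J).card)
            ≤ FG.eps v * ((FG.kappa v : ℝ) ^ (FG.Jset v).card) := by
          refine le_trans (mul_le_mul_of_nonneg_right hpn.le (by positivity)) ?_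
          exact mul_le_mul_of_nonneg_left hκe hεpos.le
        have h1s : FG.eps v * ((FG.kappa v : ℝ) ^ (FG.Jset v).card) = 1 - FG.eps v := by
          rw [one_sub_eps]; ring
        linarith
      constructor
      · rw [R.mVF_eq n v J hv (xstar v)]
        exact mul_pos (mul_pos hC hpriors) hQpos
      · rw [R.mVF_eq n v J hv (!xstar v), R.mVF_eq n v J hv (xstar v)]
        calc R.CVF (n+1) v J * prior q v (!xstar v) *
              ∏ I ∈ (FG.Jset v).erase J, R.mFV (n+1) I v (!xstar v)
            ≤ R.CVF (n+1) v J * prior q v (!xstar v) *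
              ((FG.kappa v : ℝ) ^ ((FG.Jset v).erase J).card * Q) := by
              refine mul_le_mul_of_nonneg_left hprod ?_
              exact mul_nonneg hC.le hpriorn
          _ = R.CVF (n+1) v J * (prior q v (!xstar v) *
              (FG.kappa v : ℝ) ^ ((FG.Jset v).erase J).card) * Q := by ring
          _ ≤ R.CVF (n+1) v J * prior q v (xstar v) * Q := by
              refine mul_le_mul_of_nonneg_right ?_ hQpos.le
              exact mul_le_mul_of_nonneg_left hkey hC.le

end AuxBP

/-- **Theorem 1** (convergence to the valid solution at every iteration):
if `x*` is a valid solution and the priors satisfy the sufficient initialization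
for `x*`, then for every `n ≥ 1` and every variable `v`, the marginal at `x*_v`
strictly exceeds the marginal at `1 - x*_v`; consequently the BP decision
`x̂^{(n)}_v = 1{ r^{(n)}_v(1) ≥ r^{(n)}_v(0) }` equals `x*_v`. -/
theorem bp_converges_to_valid_solution
    {V 𝒥 : Type} [Fintype V] [DecidableEq V] [Fintype 𝒥] [DecidableEq 𝒥]
    (FG : FactorGraph V 𝒥) (q : V → ℝ) (R : BPRun FG q)
    (xstar : V → Bool) (hvalid : FG.ValidSolution xstar)
    (hinit : SuffInit FG q xstar) :
    ∀ n : ℕ, 1 ≤ n → ∀ v : V,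
      marginal FG R n v (xstar v) > marginal FG R n v (!xstar v) ∧
      (if marginal FG R n v false ≤ marginal FG R n v true then true else false)
        = xstar v := by
  intro n hn v
  rcases n with _ | m
  · omega
  have hGood := good_invariant R hvalid hinit m
  have hbounds : ∀ J ∈ FG.Jset v, 0 < R.mFV (m+1) J v (xstar v) ∧
      R.mFV (m+1) J v (!xstar v) ≤ (FG.kappa v : ℝ) * R.mFV (m+1) J v (xstar v) :=
    fun J hJ => mFV_bounds R hvalid m hGood (mem_Jset.1 hJ)
  set Q : ℝ := ∏ J ∈ FG.Jset v, R.mFV (m+1) J v (xstar v) with hQ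
  have hQpos : 0 < Q := Finset.prod_pos fun J hJ => (hbounds J hJ).1
  obtain ⟨hps, hpn⟩ := prior_bounds hinit v
  have hεpos := eps_pos FG v
  have hκ1 : (1:ℝ) ≤ (FG.kappa v : ℝ) := one_le_kappa_real hvalid v
  have hKpos : (0:ℝ) < (FG.kappa v : ℝ) ^ (FG.Jset v).card := by positivity
  have hpriorn : 0 ≤ prior q v (!xstar v) := prior_nonneg (R.q_mem v) _
  have hprod : (∏ J ∈ FG.Jset v, R.mFV (m+1) J v (!xstar v))
      ≤ (FG.kappa v : ℝ) ^ (FG.Jset v).card * Q := by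
    rw [hQ, ← Finset.prod_const, ← Finset.prod_mul_distrib]
    refine Finset.prod_le_prod (fun J hJ =>
      (R.mFV_mem (m+1) J v _ (mem_Jset.1 hJ)).1) ?_
    intro J hJ
    exact (hbounds J hJ).2
  have hstrict : prior q v (!xstar v) * (FG.kappa v : ℝ) ^ (FG.Jset v).card
      < prior q v (xstar v) := by
    have h1 : prior q v (!xstar v) * (FG.kappa v : ℝ) ^ (FG.Jset v).card
        < FG.eps v * (FG.kappa v : ℝ) ^ (FG.Jset v).card :=
      mul_lt_mul_of_pos_right hpn hKpos
    have h2 : FG.eps v * (FG.kappa v : ℝ) ^ (FG.Jset v).card = 1 - FG.eps v := by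
      rw [one_sub_eps]; ring
    linarith
  have hmain : marginal FG R (m+1) v (!xstar v) < marginal FG R (m+1) v (xstar v) := by
    unfold marginal
    calc prior q v (!xstar v) * ∏ J ∈ FG.Jset v, R.mFV (m+1) J v (!xstar v)
        ≤ prior q v (!xstar v) * ((FG.kappa v : ℝ) ^ (FG.Jset v).card * Q) :=
          mul_le_mul_of_nonneg_left hprod hpriorn
      _ = (prior q v (!xstar v) * (FG.kappa v : ℝ) ^ (FG.Jset v).card) * Q := by ring
      _ < prior q v (xstar v) * Q := mul_lt_mul_of_pos_right hstrict hQpos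
  refine ⟨hmain, ?_⟩
  cases hx : xstar v with
  | false =>
      rw [hx] at hmain
      simp only [Bool.not_false] at hmain
      rw [if_neg (not_le.2 hmain)]
  | true =>
      rw [hx] at hmain
      simp only [Bool.not_true] at hmain
      rw [if_pos hmain.le]
end

section
/- Suppose the factor graph admits a valid solution x* and the priors satisfy the sufficient initialization for x*. Then after the first iteration, for every variable v ∈ V, the marginals satisfy r^{(1)}_v(x*_v) > r^{(1)}_v(1 − x*_v); i.e., the BP decision after one iteration equals x*_v for every v ∈ V. -/
/-! A valid solution makes every `κ_v ≥ 1`, so `ε_v ≤ 1/2` and the initial messages, which are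
the priors, favour `x*`. The message `m⁽¹⁾_{J→v}(x)` is, up to its constant, a sum over the
satisfying configurations `z` of `g_J` with `z_v = x` of products of initial messages. Each term
is at most the term of `z = x*|_{V_J}`, which occurs at `x = x*_v`, while at most `κ_v - 1` terms
occur at the other value; so `m⁽¹⁾_{J→v}(¬x*_v) ≤ (κ_v - 1) m⁽¹⁾_{J→v}(x*_v)`. Multiplying over
`𝒥_v` and using `ε_v κ_v ^ |𝒥_v| = 1 - ε_v`,
`r⁽¹⁾_v(¬x*_v) ≤ ε_v κ_v ^ |𝒥_v| ∏ m⁽¹⁾_{J→v}(x*_v) < r⁽¹⁾_v(x*_v)`. -/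

open Finset

variable {V 𝒥 : Type} [Fintype V] [DecidableEq V] [Fintype 𝒥] [DecidableEq 𝒥]

namespace FactorGraph

variable (FG : FactorGraph V 𝒥)

@[simp]
theorem mem_Jset {v : V} {J : 𝒥} : J ∈ FG.Jset v ↔ v ∈ FG.nbhd J := by
  simp [Jset]

def satisfying (J : 𝒥) : Finset ({y // y ∈ FG.nbhd J} → Bool) :=
  univ.filter fun z => FG.g J z = true

theorem card_satisfying_le_kappa {v : V} {J : 𝒥} (hJ : J ∈ FG.Jset v) :
    (FG.satisfying J).card ≤ FG.kappa v :=
  Finset.le_sup (f := fun J => (FG.satisfying J).card) hJ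

theorem eps_mul_one_add_kappa_pow (v : V) :
    FG.eps v * (1 + (FG.kappa v : ℝ) ^ (FG.Jset v).card) = 1 := by
  rw [eps, one_div, inv_mul_cancel₀]
  positivity

theorem eps_le_half {v : V} (hκ : 1 ≤ FG.kappa v) : FG.eps v ≤ 1 / 2 := by
  have hpow : (1 : ℝ) ≤ (FG.kappa v : ℝ) ^ (FG.Jset v).card :=
    one_le_pow₀ (by exact_mod_cast hκ)
  exact one_div_le_one_div_of_le (by norm_num) (by linarith)

variable {FG}

theorem ValidSolution.restrict_mem_satisfying {x : V → Bool} (hx : FG.ValidSolution x)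
    (J : 𝒥) : FG.restrict x J ∈ FG.satisfying J := by
  simp [satisfying, hx J]

theorem ValidSolution.one_le_kappa {x : V → Bool} (hx : FG.ValidSolution x) (v : V) :
    1 ≤ FG.kappa v := by
  obtain ⟨J, hJ⟩ := FG.facs_nonempty v
  exact (card_pos.mpr ⟨_, hx.restrict_mem_satisfying J⟩).trans_le
    (FG.card_satisfying_le_kappa (FG.mem_Jset.mpr hJ))

end FactorGraph

section Prior

variable {FG : FactorGraph V 𝒥} {q : V → ℝ} {x : V → Bool}

theorem SuffInit.prior_not_le_eps (hinit : SuffInit FG q x) (v : V) :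
    prior q v (!x v) ≤ FG.eps v := by
  cases hxv : x v
  · show 1 - q v ≤ _; linarith [(hinit v).1 hxv]
  · show q v ≤ _; linarith [(hinit v).2 hxv]

theorem SuffInit.one_sub_eps_lt_prior (hinit : SuffInit FG q x) (v : V) :
    1 - FG.eps v < prior q v (x v) := by
  cases hxv : x v
  · exact (hinit v).1 hxv
  · show _ < 1 - q v; linarith [(hinit v).2 hxv]

theorem SuffInit.prior_not_lt_prior (hinit : SuffInit FG q x) {v : V}
    (hκ : 1 ≤ FG.kappa v) : prior q v (!x v) < prior q v (x v) := by
  linarith [hinit.prior_not_le_eps v, hinit.one_sub_eps_lt_prior v, FG.eps_le_half hκ]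

theorem SuffInit.prior_pos (hinit : SuffInit FG q x) {v : V} (hκ : 1 ≤ FG.kappa v) :
    0 < prior q v (x v) := by
  linarith [hinit.one_sub_eps_lt_prior v, FG.eps_le_half hκ]

end Prior

theorem Finset.sum_filter_not_le_card_sub_one_mul {α : Type*} {s : Finset α} {p : α → Prop}
    [DecidablePred p] {f : α → ℝ} (hf : ∀ z ∈ s, 0 ≤ f z) {z₀ : α} (hz₀ : z₀ ∈ s)
    (hp : p z₀) (hmax : ∀ z ∈ s, f z ≤ f z₀) :
    ∑ z ∈ s.filter (¬p ·), f z ≤ ((s.card : ℝ) - 1) * ∑ z ∈ s.filter p, f z := by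
  have hz₀p : z₀ ∈ s.filter p := mem_filter.mpr ⟨hz₀, hp⟩
  have hcard : (s.filter (¬p ·)).card + 1 ≤ s.card := by
    have := card_pos.mpr ⟨z₀, hz₀p⟩
    have := card_filter_add_card_filter_not (s := s) p
    omega
  have hcard' : ((s.filter (¬p ·)).card : ℝ) ≤ (s.card : ℝ) - 1 := by
    have : ((s.filter (¬p ·)).card : ℝ) + 1 ≤ s.card := by exact_mod_cast hcard
    linarith
  calc ∑ z ∈ s.filter (¬p ·), f z
      ≤ (s.filter (¬p ·)).card * f z₀ := by
        rw [← nsmul_eq_mul]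
        exact sum_le_card_nsmul _ _ _ fun z hz => hmax z (mem_filter.mp hz).1
    _ ≤ ((s.card : ℝ) - 1) * f z₀ :=
        mul_le_mul_of_nonneg_right hcard' (hf z₀ hz₀)
    _ ≤ ((s.card : ℝ) - 1) * ∑ z ∈ s.filter p, f z :=
        mul_le_mul_of_nonneg_left
          (single_le_sum (fun z hz => hf z (mem_filter.mp hz).1) hz₀p)
          (by linarith [(by positivity : (0 : ℝ) ≤ (s.filter (¬p ·)).card)])

namespace BPRun

variable {FG : FactorGraph V 𝒥} {q : V → ℝ} (R : BPRun FG q)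

theorem mVF_zero {v : V} {J : 𝒥} (hv : v ∈ FG.nbhd J) (b : Bool) :
    R.mVF 0 v J b = prior q v b := by
  cases b <;> simp [prior, R.mVF_init v J hv]

def incomingProd (n : ℕ) (J : 𝒥) (v : V) (z : {y // y ∈ FG.nbhd J} → Bool) : ℝ :=
  ∏ y ∈ ((FG.nbhd J).erase v).attach, R.mVF n y.1 J (z ⟨y.1, mem_of_mem_erase y.2⟩)

theorem mFV_succ_eq_sum_satisfying (n : ℕ) {J : 𝒥} {v : V} (hv : v ∈ FG.nbhd J) (b : Bool) :
    R.mFV (n + 1) J v b = R.CFV (n + 1) J v *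
      ∑ z ∈ (FG.satisfying J).filter (· ⟨v, hv⟩ = b), R.incomingProd n J v z := by
  rw [R.mFV_eq n J v hv b, FactorGraph.satisfying, filter_filter, ← sum_filter]
  simp only [incomingProd, and_comm]

theorem mFV_succ_favors {x : V → Bool} (hx : FG.ValidSolution x) (n : ℕ) {J : 𝒥} {v : V}
    (hv : v ∈ FG.nbhd J)
    (hpos : ∀ y ∈ FG.nbhd J, 0 < R.mVF n y J (x y))
    (hdom : ∀ y ∈ FG.nbhd J, R.mVF n y J (!x y) ≤ R.mVF n y J (x y)) :
    0 < R.mFV (n + 1) J v (x v) ∧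
      R.mFV (n + 1) J v (!x v) ≤
        (((FG.satisfying J).card : ℝ) - 1) * R.mFV (n + 1) J v (x v) := by
  have hmem : ∀ y ∈ ((FG.nbhd J).erase v).attach, y.1 ∈ FG.nbhd J :=
    fun y _ => mem_of_mem_erase y.2
  have hnonneg : ∀ z, 0 ≤ R.incomingProd n J v z := fun z =>
    prod_nonneg fun y hy => (R.mVF_mem n y.1 J _ (hmem y hy)).1
  have hmax : ∀ z, R.incomingProd n J v z ≤ R.incomingProd n J v (FG.restrict x J) := by
    intro z
    refine prod_le_prod (fun y hy => (R.mVF_mem n y.1 J _ (hmem y hy)).1) fun y hy => ?_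
    rcases Bool.eq_or_eq_not (z ⟨y.1, hmem y hy⟩) (x y.1) with h | h
    · rw [h]; exact le_rfl
    · rw [h]; exact hdom y.1 (hmem y hy)
  have hz₀ := hx.restrict_mem_satisfying J
  have hsum_pos :
      0 < ∑ z ∈ (FG.satisfying J).filter (· ⟨v, hv⟩ = x v), R.incomingProd n J v z :=
    (prod_pos fun y hy => hpos y.1 (hmem y hy)).trans_le <|
      single_le_sum (fun z _ => hnonneg z) (mem_filter.mpr ⟨hz₀, rfl⟩)
  have hC := R.CFV_pos (n + 1) J v hv
  rw [R.mFV_succ_eq_sum_satisfying n hv, R.mFV_succ_eq_sum_satisfying n hv]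
  refine ⟨mul_pos hC hsum_pos, ?_⟩
  have hnot : (FG.satisfying J).filter (· ⟨v, hv⟩ = !x v) =
      (FG.satisfying J).filter (¬· ⟨v, hv⟩ = x v) := by
    ext z; cases z ⟨v, hv⟩ <;> cases x v <;> simp
  rw [hnot, mul_left_comm]
  exact mul_le_mul_of_nonneg_left
    (sum_filter_not_le_card_sub_one_mul (fun z _ => hnonneg z) hz₀ rfl fun z _ => hmax z)
    hC.le

theorem marginal_one_not_lt {x : V → Bool} (hx : FG.ValidSolution x) (hinit : SuffInit FG q x)
    (v : V) :
    marginal FG R 1 v (!x v) < marginal FG R 1 v (x v) := by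
  set K : ℝ := (FG.kappa v : ℝ)
  set d := (FG.Jset v).card
  set P := ∏ J ∈ FG.Jset v, R.mFV 1 J v (x v)
  have hfactor : ∀ J ∈ FG.Jset v,
      0 < R.mFV 1 J v (x v) ∧ R.mFV 1 J v (!x v) ≤ (K - 1) * R.mFV 1 J v (x v) := by
    intro J hJ
    have hv := FG.mem_Jset.mp hJ
    obtain ⟨hpos, hle⟩ := R.mFV_succ_favors hx 0 hv
      (fun y hy => by rw [R.mVF_zero hy]; exact hinit.prior_pos (hx.one_le_kappa y))
      (fun y hy => by
        rw [R.mVF_zero hy, R.mVF_zero hy]; exact (hinit.prior_not_lt_prior (hx.one_le_kappa y)).le)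
    have hcard : ((FG.satisfying J).card : ℝ) ≤ K :=
      Nat.cast_le.mpr (FG.card_satisfying_le_kappa hJ)
    exact ⟨hpos, hle.trans (mul_le_mul_of_nonneg_right (by linarith) hpos.le)⟩
  have hP : 0 < P := prod_pos fun J hJ => (hfactor J hJ).1
  have hK : 1 ≤ K := Nat.one_le_cast.mpr (hx.one_le_kappa v)
  have heps : 0 ≤ FG.eps v := by rw [FactorGraph.eps]; positivity
  have hprod : ∏ J ∈ FG.Jset v, R.mFV 1 J v (!x v) ≤ (K - 1) ^ d * P := by
    rw [← prod_const, ← prod_mul_distrib]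
    exact prod_le_prod (fun J hJ => (R.mFV_mem 1 J v _ (FG.mem_Jset.mp hJ)).1)
      fun J hJ => (hfactor J hJ).2
  calc marginal FG R 1 v (!x v)
      ≤ FG.eps v * ((K - 1) ^ d * P) :=
        mul_le_mul (hinit.prior_not_le_eps v) hprod
          (prod_nonneg fun J hJ => (R.mFV_mem 1 J v _ (FG.mem_Jset.mp hJ)).1) heps
    _ ≤ FG.eps v * (K ^ d * P) := by gcongr; linarith
    _ = (1 - FG.eps v) * P := by linear_combination P * FG.eps_mul_one_add_kappa_pow v
    _ < marginal FG R 1 v (x v) := mul_lt_mul_of_pos_right (hinit.one_sub_eps_lt_prior v) hP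

end BPRun

theorem ite_le_eq_of_apply_not_lt {r : Bool → ℝ} {b : Bool} (h : r (!b) < r b) :
    (if r false ≤ r true then true else false) = b := by
  cases b
  · exact if_neg (not_le.mpr h)
  · exact if_pos h.le

/-- **Lemma 1** (correct decision after one iteration): if `x*` is a valid solution
and the priors satisfy the sufficient initialization for `x*`, then after the first
iteration the marginals satisfy `r^{(1)}_v(x*_v) > r^{(1)}_v(1 - x*_v)` for every
variable `v`; i.e., the BP decision after one iteration equals `x*_v`. -/
theorem bp_first_iteration_correct
    {V 𝒥 : Type} [Fintype V] [DecidableEq V] [Fintype 𝒥] [DecidableEq 𝒥]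
    (FG : FactorGraph V 𝒥) (q : V → ℝ) (R : BPRun FG q)
    (xstar : V → Bool) (hvalid : FG.ValidSolution xstar)
    (hinit : SuffInit FG q xstar) :
    ∀ v : V,
      marginal FG R 1 v (xstar v) > marginal FG R 1 v (!xstar v) ∧
      (if marginal FG R 1 v false ≤ marginal FG R 1 v true then true else false)
        = xstar v := by
  intro v
  have h := R.marginal_one_not_lt hvalid hinit v
  exact ⟨h, ite_le_eq_of_apply_not_lt h⟩
end

section
/- Suppose the factor graph admits a valid solution x* and the priors satisfy the sufficient initialization for x*. Then after the first iteration, for every variable v ∈ V and every factor J ∈ 𝒥_v, the variable-to-factor messages satisfy m^{(1)}_{v→J}(x*_v) > m^{(1)}_{v→J}(1 − x*_v). -/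
open Finset

variable {V 𝒥 : Type} [Fintype V] [DecidableEq V] [Fintype 𝒥] [DecidableEq 𝒥]

section AuxLemmas

variable {V 𝒥 : Type} [Fintype V] [DecidableEq V] [Fintype 𝒥] [DecidableEq 𝒥]

lemma FG_kappa_one_le (FG : FactorGraph V 𝒥) (xstar : V → Bool)
    (hvalid : FG.ValidSolution xstar) (v : V) : 1 ≤ FG.kappa v := by
  obtain ⟨J, hJ⟩ := FG.facs_nonempty v
  have hJ' : J ∈ FG.Jset v := by simp [FactorGraph.Jset, hJ]
  have h1 : 1 ≤ ((univ : Finset ({y // y ∈ FG.nbhd J} → Bool)).filter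
      fun z => FG.g J z = true).card := by
    refine Finset.card_pos.mpr ⟨FG.restrict xstar J, ?_⟩
    simp [hvalid J]
  refine le_trans h1 ?_
  exact Finset.le_sup (f := fun J => ((univ : Finset ({y // y ∈ FG.nbhd J} → Bool)).filter
      fun z => FG.g J z = true).card) hJ'

lemma FG_eps_pos (FG : FactorGraph V 𝒥) (v : V) : 0 < FG.eps v := by
  have h : (0:ℝ) ≤ (FG.kappa v : ℝ) ^ (FG.Jset v).card := by positivity
  unfold FactorGraph.eps
  positivity

lemma FG_eps_le_half (FG : FactorGraph V 𝒥) (xstar : V → Bool)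
    (hvalid : FG.ValidSolution xstar) (v : V) : FG.eps v ≤ 1 / 2 := by
  have hk : (1:ℝ) ≤ (FG.kappa v : ℝ) := by
    exact_mod_cast FG_kappa_one_le FG xstar hvalid v
  have hK : (1:ℝ) ≤ (FG.kappa v : ℝ) ^ (FG.Jset v).card := one_le_pow₀ hk
  unfold FactorGraph.eps
  rw [div_le_div_iff₀ (by linarith) (by norm_num)]
  linarith

lemma m0_bounds {FG : FactorGraph V 𝒥} {q : V → ℝ} (R : BPRun FG q)
    (xstar : V → Bool) (hvalid : FG.ValidSolution xstar)
    (hinit : SuffInit FG q xstar) (y : V) (J' : 𝒥) (hy : y ∈ FG.nbhd J') :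
    R.mVF 0 y J' (!xstar y) ≤ R.mVF 0 y J' (xstar y) := by
  obtain ⟨h0, h1⟩ := R.mVF_init y J' hy
  have heps := FG_eps_le_half FG xstar hvalid y
  cases hxy : xstar y with
  | false =>
    have := (hinit y).1 hxy
    simp only [Bool.not_false, h0, h1]
    linarith
  | true =>
    have := (hinit y).2 hxy
    simp only [Bool.not_true, h0, h1]
    linarith

lemma mFV_lower {FG : FactorGraph V 𝒥} {q : V → ℝ} (R : BPRun FG q)
    (xstar : V → Bool) (hvalid : FG.ValidSolution xstar)
    (hinit : SuffInit FG q xstar) (v : V) (I : 𝒥) (hvI : v ∈ FG.nbhd I) :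
    1 ≤ (FG.kappa v : ℝ) * R.mFV 1 I v (xstar v) := by
  have hIv : I ∈ FG.Jset v := by simp [FactorGraph.Jset, hvI]
  have hk1 : (1:ℝ) ≤ (FG.kappa v : ℝ) := by
    exact_mod_cast FG_kappa_one_le FG xstar hvalid v
  have ht_nonneg : ∀ z : {y // y ∈ FG.nbhd I} → Bool, 0 ≤ (∏ y ∈ ((FG.nbhd I).erase v).attach, R.mVF 0 y.1 I (z ⟨y.1, Finset.mem_of_mem_erase y.2⟩)) := fun z => Finset.prod_nonneg fun y _ =>
    (R.mVF_mem 0 y.1 I _ (Finset.mem_of_mem_erase y.2)).1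
  have ht_le : ∀ z : {y // y ∈ FG.nbhd I} → Bool, (∏ y ∈ ((FG.nbhd I).erase v).attach, R.mVF 0 y.1 I (z ⟨y.1, Finset.mem_of_mem_erase y.2⟩)) ≤ (∏ y ∈ ((FG.nbhd I).erase v).attach, R.mVF 0 y.1 I ((FG.restrict xstar I) ⟨y.1, Finset.mem_of_mem_erase y.2⟩)) := by
    intro z
    refine Finset.prod_le_prod
      (fun y _ => (R.mVF_mem 0 y.1 I _ (Finset.mem_of_mem_erase y.2)).1) ?_
    intro y _
    have hy : y.1 ∈ FG.nbhd I := Finset.mem_of_mem_erase y.2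
    have hzsy : (FG.restrict xstar I) ⟨y.1, hy⟩ = xstar y.1 := rfl
    rw [hzsy]
    by_cases hz : z ⟨y.1, hy⟩ = xstar y.1
    · rw [hz]
    · have hz' : z ⟨y.1, hy⟩ = !xstar y.1 := by
        cases h1 : z ⟨y.1, hy⟩ <;> cases h2 : xstar y.1 <;> simp_all
      rw [hz']
      exact m0_bounds R xstar hvalid hinit y.1 I hy
  have hmc : R.mFV 1 I v (xstar v) = R.CFV 1 I v * (∑ z : {y // y ∈ FG.nbhd I} → Bool, (if z ⟨v, hvI⟩ = xstar v ∧ FG.g I z = true then (∏ y ∈ ((FG.nbhd I).erase v).attach, R.mVF 0 y.1 I (z ⟨y.1, Finset.mem_of_mem_erase y.2⟩)) else 0)) :=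
    R.mFV_eq 0 I v hvI (xstar v)
  have hmw : R.mFV 1 I v (!xstar v) = R.CFV 1 I v * (∑ z : {y // y ∈ FG.nbhd I} → Bool, (if z ⟨v, hvI⟩ = !xstar v ∧ FG.g I z = true then (∏ y ∈ ((FG.nbhd I).erase v).attach, R.mVF 0 y.1 I (z ⟨y.1, Finset.mem_of_mem_erase y.2⟩)) else 0)) :=
    R.mFV_eq 0 I v hvI (!xstar v)
  have hC := R.CFV_pos 1 I v hvI
  have hSc : (∏ y ∈ ((FG.nbhd I).erase v).attach, R.mVF 0 y.1 I ((FG.restrict xstar I) ⟨y.1, Finset.mem_of_mem_erase y.2⟩)) ≤ (∑ z : {y // y ∈ FG.nbhd I} → Bool, (if z ⟨v, hvI⟩ = xstar v ∧ FG.g I z = true then (∏ y ∈ ((FG.nbhd I).erase v).attach, R.mVF 0 y.1 I (z ⟨y.1, Finset.mem_of_mem_erase y.2⟩)) else 0)) := by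
    have hterm : (if (FG.restrict xstar I) ⟨v, hvI⟩ = xstar v ∧ FG.g I (FG.restrict xstar I) = true then (∏ y ∈ ((FG.nbhd I).erase v).attach, R.mVF 0 y.1 I ((FG.restrict xstar I) ⟨y.1, Finset.mem_of_mem_erase y.2⟩)) else 0)
        = (∏ y ∈ ((FG.nbhd I).erase v).attach, R.mVF 0 y.1 I ((FG.restrict xstar I) ⟨y.1, Finset.mem_of_mem_erase y.2⟩)) := by
      have hrfl : (FG.restrict xstar I) ⟨v, hvI⟩ = xstar v := rfl
      simp [hrfl, hvalid I]
    calc (∏ y ∈ ((FG.nbhd I).erase v).attach, R.mVF 0 y.1 I ((FG.restrict xstar I) ⟨y.1, Finset.mem_of_mem_erase y.2⟩)) = _ := hterm.symm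
      _ ≤ _ := Finset.single_le_sum
          (f := fun z => if z ⟨v, hvI⟩ = xstar v ∧ FG.g I z = true then (∏ y ∈ ((FG.nbhd I).erase v).attach, R.mVF 0 y.1 I (z ⟨y.1, Finset.mem_of_mem_erase y.2⟩)) else 0)
          (fun z _ => by
            split
            · exact ht_nonneg z
            · exact le_rfl) (Finset.mem_univ (FG.restrict xstar I))
  have hcardN : ((univ : Finset ({y // y ∈ FG.nbhd I} → Bool)).filter fun z => z ⟨v, hvI⟩ = !xstar v ∧ FG.g I z = true).card ≤ FG.kappa v - 1 := by
    have hsub : ((univ : Finset ({y // y ∈ FG.nbhd I} → Bool)).filter fun z => z ⟨v, hvI⟩ = !xstar v ∧ FG.g I z = true) ⊆ ((univ : Finset ({y // y ∈ FG.nbhd I} → Bool)).filter fun z => FG.g I z = true).erase (FG.restrict xstar I) := by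
      intro z hz
      simp only [Finset.mem_filter, Finset.mem_univ, true_and] at hz
      refine Finset.mem_erase.mpr ⟨?_, by simp [hz.2]⟩
      rintro rfl
      have hrfl : (FG.restrict xstar I) ⟨v, hvI⟩ = xstar v := rfl
      rw [hrfl] at hz
      cases hb : xstar v <;> rw [hb] at hz <;> simp at hz
    have hmem : (FG.restrict xstar I) ∈ ((univ : Finset ({y // y ∈ FG.nbhd I} → Bool)).filter fun z => FG.g I z = true) := by simp [hvalid I]
    have hsup : ((univ : Finset ({y // y ∈ FG.nbhd I} → Bool)).filter fun z => FG.g I z = true).card ≤ FG.kappa v := by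
      exact Finset.le_sup (f := fun J => ((univ : Finset ({y // y ∈ FG.nbhd J} → Bool)).filter
        fun z => FG.g J z = true).card) hIv
    calc ((univ : Finset ({y // y ∈ FG.nbhd I} → Bool)).filter fun z => z ⟨v, hvI⟩ = !xstar v ∧ FG.g I z = true).card
        ≤ (((univ : Finset ({y // y ∈ FG.nbhd I} → Bool)).filter fun z => FG.g I z = true).erase (FG.restrict xstar I)).card := Finset.card_le_card hsub
      _ = ((univ : Finset ({y // y ∈ FG.nbhd I} → Bool)).filter fun z => FG.g I z = true).card - 1 := Finset.card_erase_of_mem hmem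
      _ ≤ FG.kappa v - 1 := Nat.sub_le_sub_right hsup 1
  have hcard : (((univ : Finset ({y // y ∈ FG.nbhd I} → Bool)).filter fun z => z ⟨v, hvI⟩ = !xstar v ∧ FG.g I z = true).card : ℝ) ≤ (FG.kappa v : ℝ) - 1 := by
    have h1 : 1 ≤ FG.kappa v := FG_kappa_one_le FG xstar hvalid v
    calc (((univ : Finset ({y // y ∈ FG.nbhd I} → Bool)).filter fun z => z ⟨v, hvI⟩ = !xstar v ∧ FG.g I z = true).card : ℝ)
        ≤ ((FG.kappa v - 1 : ℕ) : ℝ) := by exact_mod_cast hcardN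
      _ = (FG.kappa v : ℝ) - 1 := by rw [Nat.cast_sub h1]; norm_num
  have hSw : (∑ z : {y // y ∈ FG.nbhd I} → Bool, (if z ⟨v, hvI⟩ = !xstar v ∧ FG.g I z = true then (∏ y ∈ ((FG.nbhd I).erase v).attach, R.mVF 0 y.1 I (z ⟨y.1, Finset.mem_of_mem_erase y.2⟩)) else 0)) ≤ ((FG.kappa v : ℝ) - 1) * (∏ y ∈ ((FG.nbhd I).erase v).attach, R.mVF 0 y.1 I ((FG.restrict xstar I) ⟨y.1, Finset.mem_of_mem_erase y.2⟩)) := by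
    calc (∑ z : {y // y ∈ FG.nbhd I} → Bool, (if z ⟨v, hvI⟩ = !xstar v ∧ FG.g I z = true then (∏ y ∈ ((FG.nbhd I).erase v).attach, R.mVF 0 y.1 I (z ⟨y.1, Finset.mem_of_mem_erase y.2⟩)) else 0))
        ≤ ∑ z : {y // y ∈ FG.nbhd I} → Bool,
          (if z ⟨v, hvI⟩ = !xstar v ∧ FG.g I z = true then (∏ y ∈ ((FG.nbhd I).erase v).attach, R.mVF 0 y.1 I ((FG.restrict xstar I) ⟨y.1, Finset.mem_of_mem_erase y.2⟩)) else 0) := by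
          refine Finset.sum_le_sum fun z _ => ?_
          split_ifs
          · exact ht_le z
          · exact le_rfl
      _ = (((univ : Finset ({y // y ∈ FG.nbhd I} → Bool)).filter fun z => z ⟨v, hvI⟩ = !xstar v ∧ FG.g I z = true).card : ℝ) * (∏ y ∈ ((FG.nbhd I).erase v).attach, R.mVF 0 y.1 I ((FG.restrict xstar I) ⟨y.1, Finset.mem_of_mem_erase y.2⟩)) := by
          rw [← Finset.sum_filter, Finset.sum_const, nsmul_eq_mul]
      _ ≤ ((FG.kappa v : ℝ) - 1) * (∏ y ∈ ((FG.nbhd I).erase v).attach, R.mVF 0 y.1 I ((FG.restrict xstar I) ⟨y.1, Finset.mem_of_mem_erase y.2⟩)) :=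
          mul_le_mul_of_nonneg_right hcard (ht_nonneg (FG.restrict xstar I))
  have hwle : R.mFV 1 I v (!xstar v) ≤ ((FG.kappa v : ℝ) - 1) * R.mFV 1 I v (xstar v) := by
    rw [hmc, hmw]
    have h1 := mul_le_mul_of_nonneg_left hSw hC.le
    have h2 : ((FG.kappa v : ℝ) - 1) * (∏ y ∈ ((FG.nbhd I).erase v).attach, R.mVF 0 y.1 I ((FG.restrict xstar I) ⟨y.1, Finset.mem_of_mem_erase y.2⟩)) ≤ ((FG.kappa v : ℝ) - 1) * (∑ z : {y // y ∈ FG.nbhd I} → Bool, (if z ⟨v, hvI⟩ = xstar v ∧ FG.g I z = true then (∏ y ∈ ((FG.nbhd I).erase v).attach, R.mVF 0 y.1 I (z ⟨y.1, Finset.mem_of_mem_erase y.2⟩)) else 0)) :=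
      mul_le_mul_of_nonneg_left hSc (by linarith)
    have h3 := mul_le_mul_of_nonneg_left h2 hC.le
    nlinarith [h1, h3]
  have hnorm := R.mFV_norm 0 I v hvI
  have hns : R.mFV 1 I v (xstar v) + R.mFV 1 I v (!xstar v) = 1 := by
    cases hx : xstar v
    · simpa using hnorm
    · simp only [Bool.not_true]
      rw [add_comm]
      simpa using hnorm
  have hring : ((FG.kappa v : ℝ) - 1) * R.mFV 1 I v (xstar v) =
      (FG.kappa v : ℝ) * R.mFV 1 I v (xstar v) - R.mFV 1 I v (xstar v) := by ring
  linarith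

end AuxLemmas

/-- **Lemma 2** (variable-to-factor messages after one iteration): if `x*` is a
valid solution and the priors satisfy the sufficient initialization for `x*`, then
`m^{(1)}_{v→J}(x*_v) > m^{(1)}_{v→J}(1 - x*_v)` for every `v ∈ V` and `J ∈ 𝒥_v`. -/
theorem bp_var_to_factor_first_iteration
    {V 𝒥 : Type} [Fintype V] [DecidableEq V] [Fintype 𝒥] [DecidableEq 𝒥]
    (FG : FactorGraph V 𝒥) (q : V → ℝ) (R : BPRun FG q)
    (xstar : V → Bool) (hvalid : FG.ValidSolution xstar)
    (hinit : SuffInit FG q xstar) :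
    ∀ v : V, ∀ J : 𝒥, v ∈ FG.nbhd J →
      R.mVF 1 v J (xstar v) > R.mVF 1 v J (!xstar v) := by
  intro v J hv
  have hJv : J ∈ FG.Jset v := by simp [FactorGraph.Jset, hv]
  have hk1 : (1:ℝ) ≤ (FG.kappa v : ℝ) := by
    exact_mod_cast FG_kappa_one_le FG xstar hvalid v
  have hk0 : (0:ℝ) < (FG.kappa v : ℝ) := by linarith
  have hd1 : 1 ≤ (FG.Jset v).card := Finset.card_pos.mpr ⟨J, hJv⟩
  set d := (FG.Jset v).card with hd
  set k := (FG.kappa v : ℝ) with hkdef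
  have hkpow_pos : (0:ℝ) < k ^ (d - 1) := pow_pos hk0 _
  have hsplit : k ^ d = k * k ^ (d - 1) := by
    rw [← pow_succ', Nat.sub_add_cancel hd1]
  have hepos : 0 < FG.eps v := FG_eps_pos FG v
  have hehalf : FG.eps v ≤ 1 / 2 := FG_eps_le_half FG xstar hvalid v
  have h1e : 1 - FG.eps v = FG.eps v * k ^ d := by
    have hden : (0:ℝ) < 1 + k ^ d := by positivity
    rw [FactorGraph.eps, ← hkdef, ← hd]
    field_simp
    ring
  have hkey : FG.eps v * k = (1 - FG.eps v) * (k ^ (d - 1))⁻¹ := by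
    rw [h1e, hsplit]
    field_simp
  -- message equations
  have hmc : R.mVF 1 v J (xstar v) = R.CVF 1 v J * prior q v (xstar v) *
      ∏ I ∈ (FG.Jset v).erase J, R.mFV 1 I v (xstar v) := R.mVF_eq 0 v J hv (xstar v)
  have hmw : R.mVF 1 v J (!xstar v) = R.CVF 1 v J * prior q v (!xstar v) *
      ∏ I ∈ (FG.Jset v).erase J, R.mFV 1 I v (!xstar v) := R.mVF_eq 0 v J hv (!xstar v)
  have hC := R.CVF_pos 1 v J hv
  have hmemI : ∀ I ∈ (FG.Jset v).erase J, v ∈ FG.nbhd I := by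
    intro I hI
    have := Finset.mem_of_mem_erase hI
    simpa [FactorGraph.Jset] using this
  -- prior bounds
  obtain ⟨hq0, hq1⟩ := R.q_mem v
  have hPc : 1 - FG.eps v < prior q v (xstar v) := by
    cases hx : xstar v
    · exact (hinit v).1 hx
    · have := (hinit v).2 hx
      show 1 - FG.eps v < 1 - q v
      linarith
  have hPw : prior q v (!xstar v) < FG.eps v := by
    cases hx : xstar v
    · have := (hinit v).1 hx
      show 1 - q v < FG.eps v
      linarith
    · exact (hinit v).2 hx
  have hPw0 : 0 ≤ prior q v (!xstar v) := by
    cases hx : xstar v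
    · show (0:ℝ) ≤ 1 - q v
      linarith
    · exact hq0
  have hPc0 : 0 ≤ prior q v (xstar v) := by linarith
  -- product bounds
  have hAc : (k ^ (d - 1))⁻¹ ≤ ∏ I ∈ (FG.Jset v).erase J, R.mFV 1 I v (xstar v) := by
    have hstep : ∏ _I ∈ (FG.Jset v).erase J, k⁻¹ ≤
        ∏ I ∈ (FG.Jset v).erase J, R.mFV 1 I v (xstar v) := by
      refine Finset.prod_le_prod (fun I _ => by positivity) ?_
      intro I hI
      have hvI := hmemI I hI
      have hlow := mFV_lower R xstar hvalid hinit v I hvI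
      rw [← hkdef] at hlow
      have hne : k ≠ 0 := ne_of_gt hk0
      have hmul := mul_le_mul_of_nonneg_left hlow (inv_nonneg.mpr hk0.le)
      calc k⁻¹ = k⁻¹ * 1 := by ring
        _ ≤ k⁻¹ * (k * R.mFV 1 I v (xstar v)) := hmul
        _ = R.mFV 1 I v (xstar v) := by field_simp
    calc (k ^ (d - 1))⁻¹ = ∏ _I ∈ (FG.Jset v).erase J, k⁻¹ := by
          rw [Finset.prod_const, Finset.card_erase_of_mem hJv, ← hd, ← inv_pow]
      _ ≤ _ := hstep
  have hAw1 : ∏ I ∈ (FG.Jset v).erase J, R.mFV 1 I v (!xstar v) ≤ 1 :=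
    Finset.prod_le_one (fun I hI => (R.mFV_mem 1 I v _ (hmemI I hI)).1)
      (fun I hI => (R.mFV_mem 1 I v _ (hmemI I hI)).2)
  -- assemble
  have hfinal : prior q v (!xstar v) * ∏ I ∈ (FG.Jset v).erase J, R.mFV 1 I v (!xstar v) <
      prior q v (xstar v) * ∏ I ∈ (FG.Jset v).erase J, R.mFV 1 I v (xstar v) := by
    have h1 : prior q v (!xstar v) * ∏ I ∈ (FG.Jset v).erase J, R.mFV 1 I v (!xstar v) ≤
        prior q v (!xstar v) := mul_le_of_le_one_right hPw0 hAw1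
    have h3 : FG.eps v ≤ FG.eps v * k := le_mul_of_one_le_right hepos.le hk1
    have h5 : (1 - FG.eps v) * (k ^ (d - 1))⁻¹ <
        prior q v (xstar v) * (k ^ (d - 1))⁻¹ :=
      mul_lt_mul_of_pos_right hPc (inv_pos.mpr hkpow_pos)
    have h6 : prior q v (xstar v) * (k ^ (d - 1))⁻¹ ≤
        prior q v (xstar v) * ∏ I ∈ (FG.Jset v).erase J, R.mFV 1 I v (xstar v) :=
      mul_le_mul_of_nonneg_left hAc hPc0
    linarith
  rw [hmc, hmw, mul_assoc, mul_assoc]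
  exact mul_lt_mul_of_pos_left hfinal hC
end
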